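/- Let a > 0 and b > 0 be real numbers and set c = a²/b. Define smooth functions on ℝ³ by X¹(x) = b·x₂ + a·x₃, Y(x) = 4a(bx₂ + ax₃)² + (a² + b²)/a, X²(x) = (1/(8b))[e^{−2ax₁}·Y(x) + e^{2ax₁}(a² − 3b²)/a + 2(b² − a²)/a], X³(x) = (1/(8a))[e^{−2ax₁}·Y(x) + e^{2ax₁}(b² − 3a²)/a + 2(a² − b²)/a], and first-order differential operators L₁ f = ∂f/∂x₁, L₂ f = ((1 + e^{2ax₁})/2)·∂f/∂x₂ + (b/a)((e^{2ax₁} − 1)/2)·∂f/∂x₃, L₃ f = (a/b)((e^{2ax₁} − 1)/2)·∂f/∂x₂ + ((1 + e^{2ax₁})/2)·∂f/∂x₃. Define the matrix of functions C by C₁₂ = C₂₁ = a·X² + c·X³, C₁₃ = C₃₁ = b·X² + a·X³, C₂₂ = C₃₃ = −2a·X¹, C₂₃ = C₃₂ = −(b + c)·X¹, and C₁₁ = 0. Then for all j, k ∈ {1,2,3} and all x ∈ ℝ³: L_j(X^k)(x) + L_k(X^j)(x) + C_{jk}(x) = 0. (This is the Killing field equation, in the left-invariant orthonormal frame, for the vector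 field X on the group with triple (a,b,a²/b), corresponding to the Lie algebra 𝔤(1).) -/

import Mathlib

/-!
The components of `X` depend on `x` only through `x₁` and `s = b x₂ + a x₃`, so that
`∂₂ = b ∂ₛ` and `∂₃ = a ∂ₛ` on them, and the frame operators collapse to `L₂ = b e^{2ax₁} ∂ₛ`,
`L₃ = a e^{2ax₁} ∂ₛ`. After this reduction each of the nine equations is an identity between
exponential polynomials in `x₁`, cancelling through `e^{2ax₁} e^{-2ax₁} = 1`.
-/

/-- Partial derivative in the first coordinate of `ℝ³ = ℝ × ℝ × ℝ`. -/
noncomputable def pd1 (f : ℝ × ℝ × ℝ → ℝ) (x : ℝ × ℝ × ℝ) : ℝ := fderiv ℝ f x (1, 0, 0)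

/-- Partial derivative in the second coordinate. -/
noncomputable def pd2 (f : ℝ × ℝ × ℝ → ℝ) (x : ℝ × ℝ × ℝ) : ℝ := fderiv ℝ f x (0, 1, 0)

/-- Partial derivative in the third coordinate. -/
noncomputable def pd3 (f : ℝ × ℝ × ℝ → ℝ) (x : ℝ × ℝ × ℝ) : ℝ := fderiv ℝ f x (0, 0, 1)

/-- The auxiliary function `Y = 4a(bx₂ + ax₃)² + (a² + b²)/a`. -/
noncomputable def Yaux (a b : ℝ) (x : ℝ × ℝ × ℝ) : ℝ :=
  4 * a * (b * x.2.1 + a * x.2.2) ^ 2 + (a ^ 2 + b ^ 2) / a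

/-- The components of the vector field:
`X¹ = b x₂ + a x₃`,
`X² = (1/(8b))[e^{−2ax₁} Y + e^{2ax₁}(a² − 3b²)/a + 2(b² − a²)/a]`,
`X³ = (1/(8a))[e^{−2ax₁} Y + e^{2ax₁}(b² − 3a²)/a + 2(a² − b²)/a]`. -/
noncomputable def Xcomp (a b : ℝ) : Fin 3 → ℝ × ℝ × ℝ → ℝ :=
  ![fun x => b * x.2.1 + a * x.2.2,
    fun x => 1 / (8 * b) *
      (Real.exp (-(2 * a * x.1)) * Yaux a b x +
        Real.exp (2 * a * x.1) * (a ^ 2 - 3 * b ^ 2) / a + 2 * (b ^ 2 - a ^ 2) / a),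
    fun x => 1 / (8 * a) *
      (Real.exp (-(2 * a * x.1)) * Yaux a b x +
        Real.exp (2 * a * x.1) * (b ^ 2 - 3 * a ^ 2) / a + 2 * (a ^ 2 - b ^ 2) / a)]

/-- The left-invariant frame operators `L₁ = ∂₁`,
`L₂ = ((1 + e^{2ax₁})/2) ∂₂ + (b/a)((e^{2ax₁} − 1)/2) ∂₃`,
`L₃ = (a/b)((e^{2ax₁} − 1)/2) ∂₂ + ((1 + e^{2ax₁})/2) ∂₃` for the case `(a, b, a²/b)`. -/
noncomputable def Lop (a b : ℝ) : Fin 3 → (ℝ × ℝ × ℝ → ℝ) → ℝ × ℝ × ℝ → ℝ :=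
  ![fun f x => pd1 f x,
    fun f x => (1 + Real.exp (2 * a * x.1)) / 2 * pd2 f x +
      b / a * ((Real.exp (2 * a * x.1) - 1) / 2) * pd3 f x,
    fun f x => a / b * ((Real.exp (2 * a * x.1) - 1) / 2) * pd2 f x +
      (1 + Real.exp (2 * a * x.1)) / 2 * pd3 f x]

/-- The correction matrix `C` for `c = a²/b`: `C₁₂ = C₂₁ = a X² + c X³`,
`C₁₃ = C₃₁ = b X² + a X³`, `C₂₂ = C₃₃ = −2a X¹`, `C₂₃ = C₃₂ = −(b + c) X¹`, `C₁₁ = 0`. -/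
noncomputable def Cmat (a b : ℝ) : Fin 3 → Fin 3 → ℝ × ℝ × ℝ → ℝ :=
  ![![fun _ => 0,
      fun x => a * Xcomp a b 1 x + a ^ 2 / b * Xcomp a b 2 x,
      fun x => b * Xcomp a b 1 x + a * Xcomp a b 2 x],
    ![fun x => a * Xcomp a b 1 x + a ^ 2 / b * Xcomp a b 2 x,
      fun x => -2 * a * Xcomp a b 0 x,
      fun x => -(b + a ^ 2 / b) * Xcomp a b 0 x],
    ![fun x => b * Xcomp a b 1 x + a * Xcomp a b 2 x,
      fun x => -(b + a ^ 2 / b) * Xcomp a b 0 x,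
      fun x => -2 * a * Xcomp a b 0 x]]

section

variable {a b : ℝ}

theorem pd_eq_of_eq_mul_comp_linear_add {f : ℝ × ℝ × ℝ → ℝ} {g h k : ℝ → ℝ} {g' h' k' : ℝ}
    {x : ℝ × ℝ × ℝ} (hf : f = fun y => g y.1 * h (b * y.2.1 + a * y.2.2) + k y.1)
    (hg : HasDerivAt g g' x.1) (hh : HasDerivAt h h' (b * x.2.1 + a * x.2.2))
    (hk : HasDerivAt k k' x.1) :
    pd1 f x = g' * h (b * x.2.1 + a * x.2.2) + k' ∧
      pd2 f x = b * (g x.1 * h') ∧ pd3 f x = a * (g x.1 * h') := by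
  subst hf
  have hs : HasFDerivAt (fun y : ℝ × ℝ × ℝ => b * y.2.1 + a * y.2.2)
      (b • (ContinuousLinearMap.fst ℝ ℝ ℝ).comp (ContinuousLinearMap.snd ℝ ℝ (ℝ × ℝ)) +
        a • (ContinuousLinearMap.snd ℝ ℝ ℝ).comp (ContinuousLinearMap.snd ℝ ℝ (ℝ × ℝ))) x :=
    ((hasFDerivAt_fst.comp x hasFDerivAt_snd).const_mul b).add
      ((hasFDerivAt_snd.comp x hasFDerivAt_snd).const_mul a)
  have hderiv :
      HasFDerivAt (fun y : ℝ × ℝ × ℝ => g y.1 * h (b * y.2.1 + a * y.2.2) + k y.1) _ x :=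
    ((hg.comp_hasFDerivAt x hasFDerivAt_fst).mul (hh.comp_hasFDerivAt x hs)).add
      (hk.comp_hasFDerivAt x hasFDerivAt_fst)
  simp only [pd1, pd2, pd3, hderiv.fderiv]
  refine ⟨?_, ?_, ?_⟩ <;>
    simp only [Function.comp_apply, smul_add, add_apply, smul_apply,
      ContinuousLinearMap.comp_apply, ContinuousLinearMap.coe_snd', ContinuousLinearMap.coe_fst',
      smul_eq_mul, mul_zero, add_zero, mul_one, zero_add] <;>
    ring

theorem Lop_zero_apply (f : ℝ × ℝ × ℝ → ℝ) (x : ℝ × ℝ × ℝ) : Lop a b 0 f x = pd1 f x := rfl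

theorem Lop_eq_of_pd_eq {f : ℝ × ℝ × ℝ → ℝ} {x : ℝ × ℝ × ℝ} {D : ℝ} (ha : a ≠ 0) (hb : b ≠ 0)
    (h2 : pd2 f x = b * D) (h3 : pd3 f x = a * D) :
    Lop a b 1 f x = b * Real.exp (2 * a * x.1) * D ∧
      Lop a b 2 f x = a * Real.exp (2 * a * x.1) * D := by
  constructor <;> simp only [Lop, Matrix.cons_val_one, Matrix.cons_val_two, Matrix.cons_val_zero,
    Matrix.head_cons, Matrix.tail_cons, h2, h3] <;> field_simp <;> ring

theorem pd_eq_of_eq_exp_Yaux {f : ℝ × ℝ × ℝ → ℝ} {κ q r : ℝ} (x : ℝ × ℝ × ℝ)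
    (hf : f = fun y =>
      κ * (Real.exp (-(2 * a * y.1)) * Yaux a b y + Real.exp (2 * a * y.1) * q + r)) :
    pd1 f x = 2 * a * κ * (Real.exp (2 * a * x.1) * q - Real.exp (-(2 * a * x.1)) * Yaux a b x) ∧
      pd2 f x = b * (8 * a * κ * Real.exp (-(2 * a * x.1)) * (b * x.2.1 + a * x.2.2)) ∧
      pd3 f x = a * (8 * a * κ * Real.exp (-(2 * a * x.1)) * (b * x.2.1 + a * x.2.2)) := by
  set s := b * x.2.1 + a * x.2.2
  have hg : HasDerivAt (fun t => κ * Real.exp (-(2 * a * t)))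
      (-(2 * a) * κ * Real.exp (-(2 * a * x.1))) x.1 :=
    (((hasDerivAt_id' x.1).const_mul (2 * a)).fun_neg.exp.const_mul κ).congr_deriv (by ring)
  have hh : HasDerivAt (fun u => 4 * a * u ^ 2 + (a ^ 2 + b ^ 2) / a) (8 * a * s) s :=
    (((hasDerivAt_pow 2 s).const_mul (4 * a)).add_const _).congr_deriv (by push_cast; ring)
  have hk : HasDerivAt (fun t => κ * (Real.exp (2 * a * t) * q + r))
      (2 * a * κ * Real.exp (2 * a * x.1) * q) x.1 :=
    ((((hasDerivAt_id' x.1).const_mul (2 * a)).exp.mul_const q).add_const r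
      |>.const_mul κ).congr_deriv (by ring)
  obtain ⟨h1, h2, h3⟩ := pd_eq_of_eq_mul_comp_linear_add (f := f)
    (by rw [hf]; funext y; simp only [Yaux]; ring) hg hh hk
  refine ⟨?_, ?_, ?_⟩
  · rw [h1]; simp only [Yaux]; ring
  · rw [h2]; ring
  · rw [h3]; ring

variable (a b)

theorem pd_Xcomp_zero (x : ℝ × ℝ × ℝ) :
    pd1 (Xcomp a b 0) x = 0 ∧ pd2 (Xcomp a b 0) x = b * 1 ∧ pd3 (Xcomp a b 0) x = a * 1 := by
  have hX : Xcomp a b 0 =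
      fun y => (fun _ => 1) y.1 * id (b * y.2.1 + a * y.2.2) + (fun _ => 0) y.1 := by
    funext y; simp [Xcomp]
  simpa using pd_eq_of_eq_mul_comp_linear_add hX
    (hasDerivAt_const _ _) (hasDerivAt_id _) (hasDerivAt_const _ _)

theorem Xcomp_one_eq : Xcomp a b 1 = fun y => 1 / (8 * b) *
    (Real.exp (-(2 * a * y.1)) * Yaux a b y + Real.exp (2 * a * y.1) * ((a ^ 2 - 3 * b ^ 2) / a) +
      2 * (b ^ 2 - a ^ 2) / a) := by
  funext y; simp only [Xcomp, Matrix.cons_val_one, Matrix.cons_val_zero]; ring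

theorem Xcomp_two_eq : Xcomp a b 2 = fun y => 1 / (8 * a) *
    (Real.exp (-(2 * a * y.1)) * Yaux a b y + Real.exp (2 * a * y.1) * ((b ^ 2 - 3 * a ^ 2) / a) +
      2 * (a ^ 2 - b ^ 2) / a) := by
  funext y; simp only [Xcomp, Matrix.cons_val_two, Matrix.tail_cons, Matrix.head_cons]; ring

end

/-- The Killing field equation for the vector field `X` on the group with triple
`(a, b, a²/b)`, corresponding to the Lie algebra `𝔤(1)`. -/
theorem g1_killing (a b : ℝ) (ha : 0 < a) (hb : 0 < b) :
    ∀ (j k : Fin 3) (x : ℝ × ℝ × ℝ),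
      Lop a b j (Xcomp a b k) x + Lop a b k (Xcomp a b j) x + Cmat a b j k x = 0 := by
  intro j k x
  obtain ⟨h01, h02, h03⟩ := pd_Xcomp_zero a b x
  obtain ⟨h11, h12, h13⟩ := pd_eq_of_eq_exp_Yaux x (Xcomp_one_eq a b)
  obtain ⟨h21, h22, h23⟩ := pd_eq_of_eq_exp_Yaux x (Xcomp_two_eq a b)
  obtain ⟨L01, L02⟩ := Lop_eq_of_pd_eq ha.ne' hb.ne' h02 h03
  obtain ⟨L11, L12⟩ := Lop_eq_of_pd_eq ha.ne' hb.ne' h12 h13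
  obtain ⟨L21, L22⟩ := Lop_eq_of_pd_eq ha.ne' hb.ne' h22 h23
  fin_cases j <;> fin_cases k <;>
    simp only [Fin.reduceFinMk, Fin.zero_eta, Fin.mk_one, Lop_zero_apply, L01, L02, L11, L12,
      L21, L22, h01, h11, h21, Cmat, Matrix.cons_val_zero, Matrix.cons_val_one,
      Matrix.cons_val_two, Matrix.head_cons, Matrix.tail_cons, add_zero]
  all_goals
    simp only [Xcomp, Real.exp_neg, Matrix.cons_val_zero, Matrix.cons_val_one,
      Matrix.cons_val_two, Matrix.head_cons, Matrix.tail_cons]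
    field_simp
    ring
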